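/- Let τ : S → (D S)^A be an LMP and let d* be the ε-distance, d*(s,t) = inf {ε | s ∼_ε t}. Then every fixpoint d of Δ_LP satisfies d(s,t) ≥ d*(s,t) for all s,t; i.e., d* dominates every fixpoint (equivalently, d* is above every fixpoint in the order d₁ ⊑ d₂ ⇔ d₁ ≥ d₂ pointwise). -/

import Mathlib

open scoped ENNReal Classical

noncomputable section

def mass {S : Type*} (φ : S → ℝ≥0∞) (X : Set S) : ℝ≥0∞ := ∑' x : X, φ x

def IsSubdist {S : Type*} (φ : S → ℝ≥0∞) : Prop := mass φ Set.univ ≤ 1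

def IsPseudometric {S : Type*} (d : S → S → ℝ≥0∞) : Prop :=
  (∀ x, d x x = 0) ∧ (∀ x y, d x y = d y x) ∧ (∀ x y z, d x z ≤ d x y + d y z)

def Bounded1 {S : Type*} (d : S → S → ℝ≥0∞) : Prop := ∀ x y, d x y ≤ 1

def eball {S : Type*} (d : S → S → ℝ≥0∞) (X : Set S) (ε : ℝ≥0∞) : Set S :=
  {y | ∃ x ∈ X, d x y < ε}

def LP {S : Type*} (d : S → S → ℝ≥0∞) (μ ν : S → ℝ≥0∞) : ℝ≥0∞ :=
  sInf {ε | ∀ X : Set S,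
    mass μ X ≤ mass ν (eball d X ε) + ε ∧ mass ν X ≤ mass μ (eball d X ε) + ε}

def relImg {S : Type*} (R : S → S → Prop) (X : Set S) : Set S := {y | ∃ x ∈ X, R x y}

def IsEpsBisim {S A : Type*} (τ : A → S → S → ℝ≥0∞) (ε : ℝ≥0∞) (R : S → S → Prop) : Prop :=
  Symmetric R ∧ ∀ s t, R s t → ∀ a : A, ∀ X : Set S,
    mass (τ a s) X ≤ mass (τ a t) (relImg R X) + ε

def EpsBisimilar {S A : Type*} (τ : A → S → S → ℝ≥0∞) (ε : ℝ≥0∞) (s t : S) : Prop :=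
  ∃ R, IsEpsBisim τ ε R ∧ R s t

def dstar {S A : Type*} (τ : A → S → S → ℝ≥0∞) (s t : S) : ℝ≥0∞ :=
  sInf {ε | ε ≤ 1 ∧ EpsBisimilar τ ε s t}

def DeltaLP {S A : Type*} (τ : A → S → S → ℝ≥0∞) (d : S → S → ℝ≥0∞) (s₀ s₁ : S) : ℝ≥0∞ :=
  ⨆ a : A, LP d (τ a s₀) (τ a s₁)

/-!
If `Δ_LP d ≤ d` and `d` is symmetric, then for every `ε ≤ 1` the relation `d x y < ε` is an
`ε`-bisimulation: the Lévy-Prokhorov distance of `τ_a x` and `τ_a y` is below `ε`, and the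
`ε`-ball around `X` is exactly the image of `X` under that relation. Hence `d* ≤ d` below `1`,
while above `1` the total relation is a `1`-bisimulation since the `τ_a s` are subdistributions.
-/

section

variable {S A : Type*}

theorem mass_mono (φ : S → ℝ≥0∞) {X Y : Set S} (h : X ⊆ Y) : mass φ X ≤ mass φ Y := by
  simp only [mass, tsum_subtype]
  exact ENNReal.tsum_le_tsum fun x => Set.indicator_le_indicator_of_subset h (fun _ => zero_le) x

theorem IsSubdist.mass_le_one {φ : S → ℝ≥0∞} (hφ : IsSubdist φ) (X : Set S) : mass φ X ≤ 1 :=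
  (mass_mono φ (Set.subset_univ X)).trans hφ

theorem eball_mono (d : S → S → ℝ≥0∞) (X : Set S) {ε ε' : ℝ≥0∞} (h : ε ≤ ε') :
    eball d X ε ⊆ eball d X ε' := fun _ ⟨x, hx, hxy⟩ => ⟨x, hx, hxy.trans_le h⟩

theorem mass_le_mass_eball_add_of_LP_lt {d : S → S → ℝ≥0∞} {μ ν : S → ℝ≥0∞} {ε : ℝ≥0∞}
    (h : LP d μ ν < ε) (X : Set S) : mass μ X ≤ mass ν (eball d X ε) + ε := by
  obtain ⟨ε', hε', hε'ε⟩ := sInf_lt_iff.mp h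
  calc mass μ X ≤ mass ν (eball d X ε') + ε' := (hε' X).1
    _ ≤ mass ν (eball d X ε) + ε := add_le_add (mass_mono ν (eball_mono d X hε'ε.le)) hε'ε.le

theorem dstar_le_of_epsBisimilar {τ : A → S → S → ℝ≥0∞} {ε : ℝ≥0∞} {s t : S} (hε : ε ≤ 1)
    (h : EpsBisimilar τ ε s t) : dstar τ s t ≤ ε :=
  sInf_le ⟨hε, h⟩

theorem dstar_le_one {τ : A → S → S → ℝ≥0∞} (hτ : ∀ a s, IsSubdist (τ a s)) (s t : S) :
    dstar τ s t ≤ 1 :=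
  dstar_le_of_epsBisimilar le_rfl
    ⟨fun _ _ => True, ⟨fun _ _ _ => trivial,
      fun _ _ _ a X => ((hτ a _).mass_le_one X).trans le_add_self⟩, trivial⟩

theorem isEpsBisim_dist_lt {τ : A → S → S → ℝ≥0∞} {d : S → S → ℝ≥0∞}
    (hsymm : ∀ x y, d x y = d y x) (hd : DeltaLP τ d ≤ d) (ε : ℝ≥0∞) :
    IsEpsBisim τ ε (fun x y => d x y < ε) := by
  refine ⟨fun x y hxy => (hsymm y x).trans_lt hxy, fun x y hxy a X => ?_⟩
  have hLP : LP d (τ a x) (τ a y) < ε :=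
    calc LP d (τ a x) (τ a y) ≤ DeltaLP τ d x y := le_iSup (fun a => LP d (τ a x) (τ a y)) a
      _ ≤ d x y := hd x y
      _ < ε := hxy
  exact mass_le_mass_eball_add_of_LP_lt hLP X

theorem dstar_le_of_deltaLP_le {τ : A → S → S → ℝ≥0∞} (hτ : ∀ a s, IsSubdist (τ a s))
    {d : S → S → ℝ≥0∞} (hsymm : ∀ x y, d x y = d y x) (hd : DeltaLP τ d ≤ d) (s t : S) :
    dstar τ s t ≤ d s t := by
  refine le_of_forall_gt_imp_ge_of_dense fun ε hε => ?_
  rcases le_or_gt ε 1 with hε1 | hε1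
  · exact dstar_le_of_epsBisimilar hε1 ⟨_, isEpsBisim_dist_lt hsymm hd ε, hε⟩
  · exact (dstar_le_one hτ s t).trans hε1.le

end

theorem stmt7 {S A : Type*} (τ : A → S → S → ℝ≥0∞) (hτ : ∀ a s, IsSubdist (τ a s))
    (d : S → S → ℝ≥0∞) (hd : IsPseudometric d) (hfix : DeltaLP τ d = d) :
    ∀ s t : S, dstar τ s t ≤ d s t :=
  dstar_le_of_deltaLP_le hτ hd.2.1 hfix.le
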